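/- Let u, v, f: M → R be smooth with v > 0, and fix α, β > 0. Set h = -log(v^{2α}) + f. Then Δ_h(u^β/v^α) = (u^{β-1}/v^{α+1})·{β v Δ_f u - α u Δ_f v + β(β-1) v |∇u|^2/u - α(α-1) u |∇v|^2/v}, where Δ_g w := Δw - ⟨∇g, ∇w⟩ denotes the drift Laplacian with weight g. -/

import Mathlib

/-!
Write `w = u^β v^(-α)` and express every derivative of `w` as `w` times a combination of the
logarithmic derivatives `∇u/u`, `∇v/v`. In `Δ_h w = Δ w + 2α ⟨∇v, ∇w⟩/v - ⟨∇f, ∇w⟩` the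
mixed terms `⟨∇u, ∇v⟩/(uv)` then cancel, and `α(α+1) - 2α² = -α(α-1)` gives the coefficient
of `|∇v|²/v²`.
-/

namespace DriftLaplacian

variable {M : Type*}

def GradMulRule (G : (M → ℝ) → (M → ℝ) → (M → ℝ)) : Prop :=
  ∀ a b c p, G (fun q => a q * b q) c p = a p * G b c p + b p * G a c p

def GradRpowRule (G : (M → ℝ) → (M → ℝ) → (M → ℝ)) : Prop :=
  ∀ (a b : M → ℝ) (c : ℝ) p, 0 < a p → G (fun q => a q ^ c) b p = c * a p ^ (c - 1) * G a b p

def LaplacianMulRule (Δ : (M → ℝ) → (M → ℝ)) (G : (M → ℝ) → (M → ℝ) → (M → ℝ)) : Prop :=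
  ∀ a b p, Δ (fun q => a q * b q) p = a p * Δ b p + b p * Δ a p + 2 * G a b p

def LaplacianRpowRule (Δ : (M → ℝ) → (M → ℝ)) (G : (M → ℝ) → (M → ℝ) → (M → ℝ)) : Prop :=
  ∀ (a : M → ℝ) (c : ℝ) p, 0 < a p →
    Δ (fun q => a q ^ c) p = c * a p ^ (c - 1) * Δ a p + c * (c - 1) * a p ^ (c - 2) * G a a p

variable {Δ : (M → ℝ) → (M → ℝ)} {G : (M → ℝ) → (M → ℝ) → (M → ℝ)}
  {a b e : M → ℝ} {c d : ℝ} {p : M}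

theorem grad_rpow_eq_mul_div (hG : GradRpowRule G) (ha : 0 < a p) :
    G (fun q => a q ^ c) b p = a p ^ c * (c * G a b p / a p) := by
  rw [hG a b c p ha, Real.rpow_sub_one ha.ne']
  ring

theorem laplacian_rpow_eq_mul (hΔ : LaplacianRpowRule Δ G) (ha : 0 < a p) :
    Δ (fun q => a q ^ c) p
      = a p ^ c * (c * Δ a p / a p + c * (c - 1) * G a a p / a p ^ 2) := by
  rw [hΔ a c p ha, Real.rpow_sub_one ha.ne', Real.rpow_sub ha, Real.rpow_two]
  ring

theorem grad_rpow_mul_rpow (hGmul : GradMulRule G) (hGrpow : GradRpowRule G)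
    (ha : 0 < a p) (hb : 0 < b p) :
    G (fun q => a q ^ c * b q ^ d) e p
      = a p ^ c * b p ^ d * (c * G a e p / a p + d * G b e p / b p) := by
  rw [hGmul, grad_rpow_eq_mul_div hGrpow ha, grad_rpow_eq_mul_div hGrpow hb]
  ring

theorem laplacian_rpow_mul_rpow (hGsymm : ∀ a b, G a b = G b a) (hGrpow : GradRpowRule G)
    (hΔmul : LaplacianMulRule Δ G) (hΔrpow : LaplacianRpowRule Δ G)
    (ha : 0 < a p) (hb : 0 < b p) :
    Δ (fun q => a q ^ c * b q ^ d) p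
      = a p ^ c * b p ^ d *
          (c * Δ a p / a p + c * (c - 1) * G a a p / a p ^ 2
            + d * Δ b p / b p + d * (d - 1) * G b b p / b p ^ 2
            + 2 * c * d * G a b p / (a p * b p)) := by
  have hab : G (fun q => a q ^ c) (fun q => b q ^ d) p
      = a p ^ c * b p ^ d * (c * d * G a b p / (a p * b p)) := by
    rw [grad_rpow_eq_mul_div hGrpow ha, hGsymm a, grad_rpow_eq_mul_div hGrpow hb, hGsymm b]
    field_simp
  rw [hΔmul, laplacian_rpow_eq_mul hΔrpow ha, laplacian_rpow_eq_mul hΔrpow hb, hab]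
  ring

theorem grad_log_rpow (hGrpow : GradRpowRule G)
    (hGlog : ∀ (a b : M → ℝ) p, 0 < a p → G (fun q => Real.log (a q)) b p = G a b p / a p)
    (ha : 0 < a p) :
    G (fun q => Real.log (a q ^ c)) b p = c * G a b p / a p := by
  rw [hGlog _ b p (Real.rpow_pos_of_pos ha c), grad_rpow_eq_mul_div hGrpow ha]
  field_simp [(Real.rpow_pos_of_pos ha c).ne']

end DriftLaplacian

open DriftLaplacian in
theorem drift_laplacian_quotient_general (M : Type*)
    (Δ : (M → ℝ) → (M → ℝ))
    (G : (M → ℝ) → (M → ℝ) → (M → ℝ))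
    (u v f : M → ℝ) (hu : ∀ p, 0 < u p) (hv : ∀ p, 0 < v p)
    (α β : ℝ)
    (Gsymm : ∀ a b, G a b = G b a)
    (Gadd : ∀ a b c p, G (fun q => a q + b q) c p = G a c p + G b c p)
    (Gneg : ∀ a b p, G (fun q => -a q) b p = -G a b p)
    (Gmul : ∀ a b c p, G (fun q => a q * b q) c p = a p * G b c p + b p * G a c p)
    (Grpow : ∀ (a b : M → ℝ) (c : ℝ) p, 0 < a p →
      G (fun q => a q ^ c) b p = c * a p ^ (c - 1) * G a b p)
    (Glog : ∀ (a b : M → ℝ) p, 0 < a p →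
      G (fun q => Real.log (a q)) b p = G a b p / a p)
    (Δmul : ∀ a b p,
      Δ (fun q => a q * b q) p = a p * Δ b p + b p * Δ a p + 2 * G a b p)
    (Δrpow : ∀ (a : M → ℝ) (c : ℝ) p, 0 < a p →
      Δ (fun q => a q ^ c) p
        = c * a p ^ (c - 1) * Δ a p + c * (c - 1) * a p ^ (c - 2) * G a a p) :
    ∀ p,
      Δ (fun q => u q ^ β / v q ^ α) p
        - G (fun q => -Real.log (v q ^ (2 * α)) + f q) (fun q => u q ^ β / v q ^ α) p
      = (u p ^ (β - 1) / v p ^ (α + 1)) *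
          (β * v p * (Δ u p - G f u p) - α * u p * (Δ v p - G f v p)
            + β * (β - 1) * v p * (G u u p / u p)
            - α * (α - 1) * u p * (G v v p / v p)) := by
  intro p
  have hw : (fun q => u q ^ β / v q ^ α) = fun q => u q ^ β * v q ^ (-α) := by
    funext q
    rw [Real.rpow_neg (hv q).le, div_eq_mul_inv]
  rw [hw, Gadd, Gneg, grad_log_rpow Grpow Glog (hv p), Gsymm v, Gsymm f,
    laplacian_rpow_mul_rpow Gsymm Grpow Δmul Δrpow (hu p) (hv p),
    grad_rpow_mul_rpow Gmul Grpow (hu p) (hv p), grad_rpow_mul_rpow Gmul Grpow (hu p) (hv p),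
    Gsymm f u, Gsymm f v, Real.rpow_sub_one (hu p).ne',
    Real.rpow_add_one (hv p).ne', Real.rpow_neg (hv p).le]
  have hu' := (hu p).ne'
  have hv' := (hv p).ne'
  have hvα := (Real.rpow_pos_of_pos (hv p) α).ne'
  field_simp
  ring

/-- **Drift Laplacian of the quotient `u^β / v^α`.**
On a Riemannian manifold `M`, `Δ` denotes the Laplace–Beltrami operator and
`G a b = ⟨∇a, ∇b⟩` the inner product of gradients, so that the drift Laplacian with
weight `g` is `Δ_g w = Δ w - G g w`.  The hypotheses encode the standard calculus rules
(symmetry and additivity of `G`, Leibniz rules, and chain rules for real powers and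
logarithms of positive functions).  Given smooth `u, v, f : M → ℝ` with `v > 0`
(and `u > 0` where differentiated), `α, β > 0`, and `h = -log(v^{2α}) + f`, we have
`Δ_h (u^β/v^α) = (u^{β-1}/v^{α+1}) { β v Δ_f u - α u Δ_f v
  + β(β-1) v |∇u|^2/u - α(α-1) u |∇v|^2/v }`. -/
theorem drift_laplacian_quotient (M : Type*)
    (Δ : (M → ℝ) → (M → ℝ))
    (G : (M → ℝ) → (M → ℝ) → (M → ℝ))
    (u v f : M → ℝ) (hu : ∀ p, 0 < u p) (hv : ∀ p, 0 < v p)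
    (α β : ℝ) (hα : 0 < α) (hβ : 0 < β)
    (Gsymm : ∀ a b, G a b = G b a)
    (Gadd : ∀ a b c p, G (fun q => a q + b q) c p = G a c p + G b c p)
    (Gneg : ∀ a b p, G (fun q => -a q) b p = -G a b p)
    (Gmul : ∀ a b c p, G (fun q => a q * b q) c p = a p * G b c p + b p * G a c p)
    (Grpow : ∀ (a b : M → ℝ) (c : ℝ) p, 0 < a p →
      G (fun q => a q ^ c) b p = c * a p ^ (c - 1) * G a b p)
    (Glog : ∀ (a b : M → ℝ) p, 0 < a p →
      G (fun q => Real.log (a q)) b p = G a b p / a p)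
    (Δmul : ∀ a b p,
      Δ (fun q => a q * b q) p = a p * Δ b p + b p * Δ a p + 2 * G a b p)
    (Δrpow : ∀ (a : M → ℝ) (c : ℝ) p, 0 < a p →
      Δ (fun q => a q ^ c) p
        = c * a p ^ (c - 1) * Δ a p + c * (c - 1) * a p ^ (c - 2) * G a a p) :
    ∀ p,
      Δ (fun q => u q ^ β / v q ^ α) p
        - G (fun q => -Real.log (v q ^ (2 * α)) + f q) (fun q => u q ^ β / v q ^ α) p
      = (u p ^ (β - 1) / v p ^ (α + 1)) *
          (β * v p * (Δ u p - G f u p) - α * u p * (Δ v p - G f v p)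
            + β * (β - 1) * v p * (G u u p / u p)
            - α * (α - 1) * u p * (G v v p / v p)) :=
  drift_laplacian_quotient_general M Δ G u v f hu hv α β Gsymm Gadd Gneg Gmul Grpow Glog Δmul Δrpow
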